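/- arXiv:2302.08253 — 3 statements merged into one kernel-verified Lean document; each statement's English description precedes it below -/
import Mathlib

section
/- Let A be an open subset of ℝⁿ and F : A × ℝ → ℝ be continuously differentiable. Suppose there exists a function g : A → ℝ such that ∂F/∂y(x,y) > g(x) > 0 for all (x,y) ∈ A × ℝ. Then there exists a continuously differentiable function G : A → ℝ such that F(x, G(x)) = 0 for all x ∈ A. -/
/-!
Since `∂F/∂y ≥ g x > 0`, each `y ↦ F (x, y)` grows at least linearly in both directions, hence is
a strictly increasing bijection of `ℝ`; let `G x` be its unique zero. Near every `x₀ ∈ A` the local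
implicit function theorem gives a `C¹` solution of `F (x, ψ x) = 0`, and uniqueness of the zero
forces `ψ = G` there.
-/

open Filter Function Topology

theorem surjective_of_hasDerivAt_of_le {f f' : ℝ → ℝ} {c : ℝ} (hc : 0 < c)
    (hf : ∀ y, HasDerivAt f (f' y) y) (hf' : ∀ y, c ≤ f' y) : Surjective f := by
  have hdiff : Differentiable ℝ f := fun y => (hf y).differentiableAt
  have hderiv : ∀ y, c ≤ deriv f y := fun y => (hf y).deriv ▸ hf' y
  refine hdiff.continuous.surjective ?_ ?_
  · refine tendsto_atTop_mono' _ ?_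
      (tendsto_atTop_add_const_left _ (f 0) (tendsto_id.const_mul_atTop hc))
    filter_upwards [eventually_ge_atTop 0] with y hy
    have := mul_sub_le_image_sub_of_le_deriv hdiff hderiv hy
    dsimp only [id]
    linarith
  · refine tendsto_atBot_mono' _ ?_
      (tendsto_atBot_add_const_left _ (f 0) (tendsto_id.const_mul_atBot hc))
    filter_upwards [eventually_le_atBot 0] with y hy
    have := mul_sub_le_image_sub_of_le_deriv hdiff hderiv hy
    dsimp only [id]
    linarith

section ImplicitFunction

variable {𝕜 : Type*} [RCLike 𝕜]
  {E₁ : Type*} [NormedAddCommGroup E₁] [NormedSpace 𝕜 E₁]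
  {E₂ : Type*} [NormedAddCommGroup E₂] [NormedSpace 𝕜 E₂]
  {F : Type*} [NormedAddCommGroup F] [NormedSpace 𝕜 F]

theorem ContinuousLinearMap.isInvertible_of_apply_one_ne_zero {L : 𝕜 →L[𝕜] 𝕜} (hL : L 1 ≠ 0) :
    L.IsInvertible :=
  ⟨ContinuousLinearEquiv.unitsEquivAut 𝕜 (Units.mk0 (L 1) hL), by ext; simp⟩

theorem isInvertible_fderiv_comp_inr_of_hasDerivAt {f : E₁ × 𝕜 → 𝕜} {u : E₁ × 𝕜} {c : 𝕜}
    (hf : DifferentiableAt 𝕜 f u) (hc : HasDerivAt (fun y => f (u.1, y)) c u.2) (hc₀ : c ≠ 0) :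
    (fderiv 𝕜 f u ∘L .inr 𝕜 E₁ 𝕜).IsInvertible := by
  have hpartial : HasFDerivAt (fun y => f (u.1, y)) (fderiv 𝕜 f u ∘L .inr 𝕜 E₁ 𝕜) u.2 :=
    hf.hasFDerivAt.comp u.2 (hasFDerivAt_prodMk_right u.1 u.2)
  refine ContinuousLinearMap.isInvertible_of_apply_one_ne_zero ?_
  rw [hpartial.unique hc.hasFDerivAt]
  simpa using hc₀

theorem contDiffAt_of_eventually_apply_eq [CompleteSpace E₁] [CompleteSpace E₂] [CompleteSpace F]
    {n : WithTop ℕ∞} {f : E₁ × E₂ → F} {G : E₁ → E₂} {x₀ : E₁}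
    (hf : ContDiffAt 𝕜 n f (x₀, G x₀)) (hn : n ≠ 0)
    (hf₂ : (fderiv 𝕜 f (x₀, G x₀) ∘L .inr 𝕜 E₁ E₂).IsInvertible)
    (hG : ∀ᶠ x in 𝓝 x₀, f (x, G x) = f (x₀, G x₀))
    (hinj : ∀ᶠ x in 𝓝 x₀, Injective fun y => f (x, y)) :
    ContDiffAt 𝕜 n G x₀ := by
  refine (hf.contDiffAt_implicitFunction hn hf₂).congr_of_eventuallyEq ?_
  filter_upwards [hG, hinj, hf.eventually_apply_implicitFunction hn hf₂] with x hGx hinjx hψx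
  exact hinjx (hGx.trans hψx.symm)

end ImplicitFunction

/-- Global implicit function theorem: if `F : A × ℝ → ℝ` is `C¹` on `A × ℝ` (`A ⊆ ℝⁿ` open)
and its partial derivative in the second variable satisfies `∂F/∂y (x,y) > g x > 0` for all
`(x,y) ∈ A × ℝ`, then there is a `C¹` function `G : A → ℝ` with `F (x, G x) = 0` on `A`. -/
theorem global_implicit_function_theorem
    (n : ℕ) (A : Set (Fin n → ℝ)) (hA : IsOpen A)
    (F : (Fin n → ℝ) × ℝ → ℝ) (hF : ContDiffOn ℝ 1 F (A ×ˢ (Set.univ : Set ℝ)))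
    (F' : (Fin n → ℝ) → ℝ → ℝ)
    (hF' : ∀ x ∈ A, ∀ y : ℝ, HasDerivAt (fun t => F (x, t)) (F' x y) y)
    (g : (Fin n → ℝ) → ℝ)
    (hg : ∀ x ∈ A, ∀ y : ℝ, F' x y > g x ∧ g x > 0) :
    ∃ G : (Fin n → ℝ) → ℝ, ContDiffOn ℝ 1 G A ∧ ∀ x ∈ A, F (x, G x) = 0 := by
  have hpos : ∀ x ∈ A, ∀ y, 0 < F' x y := fun x hx y => (hg x hx y).2.trans (hg x hx y).1
  have hinj : ∀ x ∈ A, Injective fun y => F (x, y) := fun x hx =>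
    (strictMono_of_hasDerivAt_pos (hF' x hx) (hpos x hx)).injective
  have hzero : ∀ x ∈ A, ∃ y, F (x, y) = 0 := fun x hx =>
    surjective_of_hasDerivAt_of_le (hg x hx 0).2 (hF' x hx) (fun y => (hg x hx y).1.le) 0
  choose! G hG using hzero
  refine ⟨G, fun x₀ hx₀ => ContDiffAt.contDiffWithinAt ?_, hG⟩
  have hFx₀ : ContDiffAt ℝ 1 F (x₀, G x₀) :=
    hF.contDiffAt ((hA.prod isOpen_univ).mem_nhds ⟨hx₀, trivial⟩)
  refine contDiffAt_of_eventually_apply_eq hFx₀ one_ne_zero ?_ ?_ ?_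
  · exact isInvertible_fderiv_comp_inr_of_hasDerivAt (hFx₀.differentiableAt one_ne_zero)
      (hF' x₀ hx₀ _) (hpos x₀ hx₀ _).ne'
  · filter_upwards [hA.mem_nhds hx₀] with x hx
    rw [hG x hx, hG x₀ hx₀]
  · filter_upwards [hA.mem_nhds hx₀] with x hx using hinj x hx
end

section
/- Let U : ℝ → ℝ be C² with U' > 0 and U'' < 0, let ν > 0, σ ≠ 0, and fix x, y, z, ψ, η, μ ∈ ℝ. Then the equation U'(x+y)μ + U''(x+y)(zσ + πσ²) + (U'(ψ + πη + x + y) − U'(x+y))ην = 0 admits exactly one solution π ∈ ℝ. -/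
/-- For a `C²` utility `U` with `U' > 0` and `U'' < 0`, `ν > 0` and `σ ≠ 0`,
the optimality equation
`U'(x+y)μ + U''(x+y)(zσ + πσ²) + (U'(ψ + πη + x + y) − U'(x+y))ην = 0`
admits exactly one solution `π ∈ ℝ`. -/
theorem optimality_equation_unique_solution
    (U : ℝ → ℝ) (hU : ContDiff ℝ 2 U)
    (hU' : ∀ t, deriv U t > 0) (hU'' : ∀ t, deriv (deriv U) t < 0)
    (ν σ : ℝ) (hν : ν > 0) (hσ : σ ≠ 0) (x y z ψ η μ : ℝ) :
    ∃! π : ℝ,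
      deriv U (x + y) * μ + deriv (deriv U) (x + y) * (z * σ + π * σ ^ 2)
        + (deriv U (ψ + π * η + x + y) - deriv U (x + y)) * η * ν = 0 := by
  have hcont : Continuous (deriv U) := hU.continuous_deriv one_le_two
  have hanti : StrictAnti (deriv U) := strictAnti_of_deriv_neg hU''
  set F : ℝ → ℝ := fun π =>
      deriv U (x + y) * μ + deriv (deriv U) (x + y) * (z * σ + π * σ ^ 2)
        + (deriv U (ψ + π * η + x + y) - deriv U (x + y)) * η * ν with hF
  show ∃! π : ℝ, F π = 0
  have hσ2 : (0:ℝ) < σ ^ 2 := by positivity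
  have hm : deriv (deriv U) (x + y) * σ ^ 2 < 0 :=
    mul_neg_of_neg_of_pos (hU'' _) hσ2
  -- antitonicity of the nonlinear part
  have hG : ∀ a b : ℝ, a ≤ b →
      (deriv U (ψ + b * η + x + y) - deriv U (x + y)) * η * ν ≤
      (deriv U (ψ + a * η + x + y) - deriv U (x + y)) * η * ν := by
    intro a b hab
    rcases le_or_gt 0 η with hη | hη
    · have h1 : ψ + a * η + x + y ≤ ψ + b * η + x + y := by nlinarith
      have h2 := hanti.antitone h1
      nlinarith [mul_nonneg (mul_nonneg (sub_nonneg.2 h2) hη) hν.le]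
    · have h1 : ψ + b * η + x + y ≤ ψ + a * η + x + y := by nlinarith
      have h2 := hanti.antitone h1
      nlinarith [mul_nonneg (mul_nonneg (sub_nonneg.2 h2) (neg_nonneg.2 hη.le)) hν.le]
  have hFanti : StrictAnti F := by
    intro a b hab
    have h1 := hG a b hab.le
    have h2 : deriv (deriv U) (x + y) * σ ^ 2 * (b - a) < 0 :=
      mul_neg_of_neg_of_pos hm (sub_pos.2 hab)
    simp only [hF]
    nlinarith
  have hFc : Continuous F := by
    apply Continuous.add
    · apply Continuous.add
      · exact continuous_const
      · exact continuous_const.mul (continuous_const.add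
          ((continuous_id.mul continuous_const)))
    · exact (((hcont.comp (by continuity)).sub continuous_const).mul
        continuous_const).mul continuous_const
  set c : ℝ := deriv U (x + y)
  set B : ℝ := deriv (deriv U) (x + y)
  set m : ℝ := B * σ ^ 2 with hmdef
  have hmne : m ≠ 0 := ne_of_lt hm
  set A : ℝ := c * μ + B * z * σ
  set K : ℝ := (deriv U (ψ + 0 * η + x + y) - c) * η * ν with hK
  have hkey : ∀ π : ℝ, F π = A + m * π +
      (deriv U (ψ + π * η + x + y) - c) * η * ν := by
    intro π; simp only [hF]; ring
  -- choose endpoints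
  set b : ℝ := max 0 ((-(A + K) - 1) / m) with hb
  set a : ℝ := min 0 ((-(A + K) + 1) / m) with ha
  clear_value c B m A K
  have hFb : F b < 0 := by
    have h1 : m * b ≤ m * ((-(A + K) - 1) / m) :=
      mul_le_mul_of_nonpos_left (le_max_right _ _) hm.le
    have h2 : m * ((-(A + K) - 1) / m) = -(A + K) - 1 := by field_simp
    have h3 := hG 0 b (le_max_left _ _)
    rw [hkey]
    rw [← hK] at h3
    linarith
  have hFa : 0 < F a := by
    have h1 : m * ((-(A + K) + 1) / m) ≤ m * a :=
      mul_le_mul_of_nonpos_left (min_le_right _ _) hm.le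
    have h2 : m * ((-(A + K) + 1) / m) = -(A + K) + 1 := by field_simp
    have h3 := hG a 0 (min_le_left _ _)
    rw [hkey]
    rw [← hK] at h3
    linarith
  have hab : a ≤ b := le_trans (min_le_left _ _) (le_max_left _ _)
  obtain ⟨π, -, hπ⟩ := intermediate_value_Icc' hab hFc.continuousOn
    ⟨hFb.le, hFa.le⟩
  exact ⟨π, hπ, fun w hw => hFanti.injective (hπ ▸ hw : F w = F π)⟩
end

section
/- Let δ > 0, ν > 0, η ≠ 0 and μ ∈ ℝ with c := 1 − μ/(ην) > 0. Then sup_{π ∈ ℝ} { πμ − (ν/δ)(e^{−δ(ψ + πη)} − 1 + δ(ψ + πη)) } = −(μ/η)ψ + (μ/(δη)) + (ν/δ)·c·ln c, equivalently the pure-jump exponential BSDE driver equals f(z,ψ) = −(δ/2)z² + (ν/δ)(1 − μ/(ην))ln(1 − μ/(ην)) − (μ/η)(ψ − 1/δ). -/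
/-!
With `u = -δ(ψ + πη)` and `c = 1 - μ/(ην)` the objective is `(ν/δ)(c u - eᵘ) + ν/δ - (μ/η)ψ`.
Young's inequality for `exp`, `c u - eᵘ ≤ c log c - c` (which is `1 + x ≤ eˣ` at `x = u - log c`),
bounds it, with equality at `u = log c`, i.e. at `π* = -(log c / δ + ψ) / η`.
-/

namespace Real

theorem mul_sub_exp_le_mul_log_sub {c : ℝ} (hc : 0 < c) (u : ℝ) :
    c * u - exp u ≤ c * log c - c := by
  have h := add_one_le_exp (u - log c)
  rw [exp_sub, exp_log hc, le_div_iff₀ hc] at h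
  linarith

end Real

section PureJumpDriver

open Real (exp log exp_log mul_sub_exp_le_mul_log_sub)

variable {δ ν μ η : ℝ}

theorem pure_jump_objective_eq (hδ : δ ≠ 0) (hν : ν ≠ 0) (hη : η ≠ 0) (ψ π : ℝ) :
    π * μ - (ν / δ) * (exp (-δ * (ψ + π * η)) - 1 + δ * (ψ + π * η))
      = (ν / δ) * ((1 - μ / (η * ν)) * (-δ * (ψ + π * η)) - exp (-δ * (ψ + π * η)))
        + ν / δ - (μ / η) * ψ := by
  field_simp
  ring

theorem iSup_pure_jump_objective (hδ : 0 < δ) (hν : 0 < ν) (hη : η ≠ 0)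
    (hc : 0 < 1 - μ / (η * ν)) (ψ : ℝ) :
    (⨆ π : ℝ, (π * μ - (ν / δ) * (exp (-δ * (ψ + π * η)) - 1 + δ * (ψ + π * η))))
      = -(μ / η) * ψ + μ / (δ * η)
        + (ν / δ) * (1 - μ / (η * ν)) * log (1 - μ / (η * ν)) := by
  set c := 1 - μ / (η * ν)
  have hobj := pure_jump_objective_eq (μ := μ) hδ.ne' hν.ne' hη ψ
  have hπstar : -δ * (ψ + (-(log c / δ + ψ) / η) * η) = log c := by
    field_simp
    ring
  have hle : ∀ π : ℝ,
      π * μ - (ν / δ) * (exp (-δ * (ψ + π * η)) - 1 + δ * (ψ + π * η))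
        ≤ (ν / δ) * (c * log c - c) + ν / δ - (μ / η) * ψ := fun π => by
    rw [hobj]
    have := mul_le_mul_of_nonneg_left (mul_sub_exp_le_mul_log_sub hc (-δ * (ψ + π * η)))
      (div_pos hν hδ).le
    linarith
  have hmax : (ν / δ) * (c * log c - c) + ν / δ - (μ / η) * ψ
      = -(μ / η) * ψ + μ / (δ * η) + (ν / δ) * c * log c := by
    simp only [c]
    field_simp
    ring
  rw [← hmax]
  refine ciSup_eq_of_forall_le_of_forall_lt_exists_gt hle fun _ hlt => ⟨-(log c / δ + ψ) / η, ?_⟩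
  rwa [hobj, hπstar, exp_log hc]

end PureJumpDriver

/-- Explicit value of the supremum in the pure-jump exponential driver:
`sup_π { πμ − (ν/δ)(e^{−δ(ψ+πη)} − 1 + δ(ψ+πη)) } = −(μ/η)ψ + μ/(δη) + (ν/δ)·c·ln c`,
with `c = 1 − μ/(ην)`; equivalently the driver equals
`f(z,ψ) = −(δ/2)z² + (ν/δ)c ln c − (μ/η)(ψ − 1/δ)`. -/
theorem pure_jump_exponential_driver_explicit
    (δ ν μ η : ℝ) (hδ : δ > 0) (hν : ν > 0) (hη : η ≠ 0)
    (hc : 1 - μ / (η * ν) > 0) :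
    (∀ ψ : ℝ,
      (⨆ π : ℝ, (π * μ
          - (ν / δ) * (Real.exp (-δ * (ψ + π * η)) - 1 + δ * (ψ + π * η))))
        = -(μ / η) * ψ + μ / (δ * η)
          + (ν / δ) * (1 - μ / (η * ν)) * Real.log (1 - μ / (η * ν))) ∧
    (∀ z ψ : ℝ,
      (⨆ π : ℝ, (π * μ
          - (ν / δ) * (Real.exp (-δ * (ψ + π * η)) - 1 + δ * (ψ + π * η))))
        - (δ / 2) * z ^ 2
      = -(δ / 2) * z ^ 2
          + (ν / δ) * (1 - μ / (η * ν)) * Real.log (1 - μ / (η * ν))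
          - (μ / η) * (ψ - 1 / δ)) := by
  refine ⟨iSup_pure_jump_objective hδ hν hη hc, fun z ψ => ?_⟩
  rw [iSup_pure_jump_objective hδ hν hη hc ψ]
  ring
end
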